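/- arXiv:1701.06469 — 2 statements merged into one kernel-verified Lean document; each statement's English description precedes it below -/
import Mathlib

section
/- Let A be the algebra generated by a in which every word containing two or more subwords a² is zero. If a multilinear polynomial f is alternating in the pair (x₁,x₂) and also alternating in a disjoint pair (x₃,x₄), then f is a polynomial identity of A. -/
noncomputable section

open Filter Topology

/-- Is a free-magma element a single leaf? -/
def FreeMagma.isLeaf {X : Type*} : FreeMagma X → Bool
  | .of _ => true
  | .mul _ _ => false

/-- The number of occurrences of the subword `a·a` in a monomial in one generator `a`. -/
def countSq : FreeMagma Unit → ℕ
  | .of _ => 0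
  | .mul x y => countSq x + countSq y + (if x.isLeaf && y.isLeaf then 1 else 0)

variable (F : Type) [Field F] [CharZero F]

/-- The free nonassociative (non-unital) algebra on one generator `a`. -/
abbrev FA := FreeNonUnitalNonAssocAlgebra F Unit

/-- The monomial of `FA F` corresponding to a magma word. -/
def mono (m : FreeMagma Unit) : FA F := MonoidAlgebra.single m (1 : F)

/-- The relations ideal of `A`: the span of all monomials containing two or more
subwords equal to `a²`.  The algebra `A` of the paper is `FA F` modulo `relI F`. -/
def relI : Submodule F (FA F) :=
  Submodule.span F {x : FA F | ∃ m : FreeMagma Unit, 2 ≤ countSq m ∧ x = mono F m}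

/-- Number of occurrences of the variable `i` in a magma word over `ℕ`. -/
def occ : FreeMagma ℕ → ℕ → ℕ
  | .of j, i => if j = i then 1 else 0
  | .mul x y, i => occ x i + occ y i

/-- The free nonassociative algebra on countably many variables `x₀, x₁, …`. -/
abbrev FreeN := FreeNonUnitalNonAssocAlgebra F ℕ

/-- The monomial of `FreeN F` corresponding to a magma word. -/
def monoN (t : FreeMagma ℕ) : FreeN F := MonoidAlgebra.single t (1 : F)

/-- `P_n`: the space of multilinear polynomials in the variables `x₀, …, x_{n-1}`. -/
def Pmulti (n : ℕ) : Submodule F (FreeN F) :=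
  Submodule.span F {x : FreeN F | ∃ t : FreeMagma ℕ,
    (∀ i : ℕ, occ t i = if i < n then 1 else 0) ∧ x = monoN F t}

/-- The identities of the algebra `A = FA F / relI F`: polynomials vanishing under every
substitution of elements of `A`. -/
def IdA : Submodule F (FreeN F) :=
  ⨅ xs : ℕ → FA F,
    Submodule.comap (FreeNonUnitalNonAssocAlgebra.lift F xs : FreeN F →ₗ[F] FA F) (relI F)

/-- The `n`-th codimension of `A`: the dimension of `P_n/(P_n ∩ Id(A))`. -/
def codimA (n : ℕ) : ℕ :=
  Module.finrank F (↥(Pmulti F n) ⧸ Submodule.comap (Pmulti F n).subtype (IdA F))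

/-- Renaming of variables: the algebra endomorphism of `FreeN F` induced by `σ : ℕ → ℕ`. -/
def renameVars (σ : ℕ → ℕ) : FreeN F →ₙₐ[F] FreeN F :=
  FreeNonUnitalNonAssocAlgebra.lift F (fun i => FreeNonUnitalNonAssocAlgebra.of F (σ i))

/-! By multilinearity it suffices to substitute monomials `m₀, m₁, …` of `A` for the
variables. If `m₀ = m₁` or `m₂ = m₃`, alternation in that pair makes the value vanish, since
`2 ≠ 0` in `F`. Otherwise, as `a` is the only monomial without a subword `a²`, each of the pairs
`m₀, m₁` and `m₂, m₃` contributes a square, so every monomial of the substituted value has at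
least two squares and lies in the relations ideal. -/

open FreeNonUnitalNonAssocAlgebra

lemma countSq_mul (x y : FreeMagma Unit) :
    countSq (x * y) = countSq x + countSq y + (if x.isLeaf && y.isLeaf then 1 else 0) := rfl

lemma eq_of_countSq_eq_zero {m : FreeMagma Unit} (h : countSq m = 0) : m = .of () := by
  induction m with
  | ih1 u => rfl
  | ih2 x y hx hy =>
    rw [countSq_mul, Nat.add_eq_zero_iff, Nat.add_eq_zero_iff] at h
    obtain ⟨⟨hx0, hy0⟩, hsq⟩ := h
    rw [hx hx0, hy hy0] at hsq
    simp [FreeMagma.isLeaf] at hsq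

lemma one_le_countSq_add_countSq_of_ne {m m' : FreeMagma Unit} (h : m ≠ m') :
    1 ≤ countSq m + countSq m' := by
  by_contra! h0
  exact h ((eq_of_countSq_eq_zero (by omega)).trans (eq_of_countSq_eq_zero (by omega)).symm)

lemma sum_occ_mul_countSq_le (s : Finset ℕ) (ms : ℕ → FreeMagma Unit) (t : FreeMagma ℕ) :
    ∑ i ∈ s, occ t i * countSq (ms i) ≤ countSq (FreeMagma.lift ms t) := by
  induction t with
  | ih1 j =>
    simp only [occ, ite_mul, one_mul, zero_mul, Finset.sum_ite_eq]
    split_ifs <;> simp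
  | ih2 x y hx hy =>
    calc ∑ i ∈ s, occ (x * y) i * countSq (ms i)
        = ∑ i ∈ s, occ x i * countSq (ms i) + ∑ i ∈ s, occ y i * countSq (ms i) := by
          simp only [← Finset.sum_add_distrib, ← add_mul]; rfl
      _ ≤ countSq (FreeMagma.lift ms x) + countSq (FreeMagma.lift ms y) := add_le_add hx hy
      _ ≤ countSq (FreeMagma.lift ms (x * y)) := by rw [map_mul, countSq_mul]; omega

lemma FreeMagma.lift_congr_of_occ {β : Type*} [Mul β] {xs ys : ℕ → β} {t : FreeMagma ℕ}
    (h : ∀ i, occ t i ≠ 0 → xs i = ys i) : FreeMagma.lift xs t = FreeMagma.lift ys t := by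
  induction t with
  | ih1 i => exact h i (by simp [occ])
  | ih2 x y hx hy =>
    have hocc (i : ℕ) : occ (x * y) i = occ x i + occ y i := rfl
    rw [map_mul, map_mul, hx fun i hi => h i (by rw [hocc]; omega),
      hy fun i hi => h i (by rw [hocc]; omega)]

lemma FreeMagma.lift_update_of_occ_eq_zero {β : Type*} [Mul β] (xs : ℕ → β)
    {t : FreeMagma ℕ} {k : ℕ} (h : occ t k = 0) (u : β) :
    FreeMagma.lift (Function.update xs k u) t = FreeMagma.lift xs t :=
  FreeMagma.lift_congr_of_occ fun i hi => Function.update_of_ne (by rintro rfl; exact hi h) _ _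

section Evaluation

variable {F : Type} [Field F] {A : Type*} [NonUnitalNonAssocSemiring A] [Module F A]
  [IsScalarTower F A A] [SMulCommClass F A A]

lemma isLinearMap_lift_update_of_occ_eq_one (xs : ℕ → A) {t : FreeMagma ℕ} {k : ℕ}
    (h : occ t k = 1) : IsLinearMap F fun u => FreeMagma.lift (Function.update xs k u) t := by
  induction t with
  | ih1 i =>
    obtain rfl : i = k := by by_contra hik; simp [occ, hik] at h
    simp only [FreeMagma.lift_of, Function.update_self]
    exact LinearMap.id.isLinear
  | ih2 x y hx hy =>
    rcases Nat.add_eq_one_iff.mp h with ⟨hx0, hy1⟩ | ⟨hx1, hy0⟩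
    · have hy := hy hy1
      constructor <;> intros <;>
        simp only [map_mul, FreeMagma.lift_update_of_occ_eq_zero xs hx0, hy.map_add,
          hy.map_smul, mul_add, mul_smul_comm]
    · have hx := hx hx1
      constructor <;> intros <;>
        simp only [map_mul, FreeMagma.lift_update_of_occ_eq_zero xs hy0, hx.map_add,
          hx.map_smul, add_mul, smul_mul_assoc]

lemma lift_monoN (xs : ℕ → A) (t : FreeMagma ℕ) :
    lift F xs (monoN F t) = FreeMagma.lift xs t := by
  simp [lift, monoN]

lemma lift_renameVars (xs : ℕ → A) (σ : ℕ → ℕ) (f : FreeN F) :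
    lift F xs (renameVars F σ f) = lift F (xs ∘ σ) f := by
  have h : (lift F xs).comp (renameVars F σ) = lift F (xs ∘ σ) := by
    refine hom_ext F fun i => ?_
    simp [renameVars]
  exact DFunLike.congr_fun h f

end Evaluation

lemma Fin.extend_val_apply {n : ℕ} {α : Type*} (g : Fin n → α) (e : ℕ → α) {i : ℕ}
    (hi : i < n) : Function.extend Fin.val g e i = g ⟨i, hi⟩ :=
  Fin.val_injective.extend_apply g e ⟨i, hi⟩

lemma Fin.extend_val_update {n : ℕ} {α : Type*} [Zero α] [DecidableEq (Fin n)]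
    (xs : Fin n → α) (k : Fin n) (u : α) :
    Function.extend Fin.val (Function.update xs k u) 0 =
      Function.update (Function.extend Fin.val xs 0) k u := by
  funext i
  by_cases hi : ∃ j : Fin n, j.val = i
  · obtain ⟨j, rfl⟩ := hi
    rcases eq_or_ne j k with rfl | hjk
    · simp [Fin.extend_val_apply]
    · rw [Function.update_of_ne (Fin.val_injective.ne hjk), Fin.extend_val_apply _ _ j.is_lt,
        Fin.extend_val_apply _ _ j.is_lt, Function.update_of_ne hjk]
  · rw [Function.update_of_ne fun h => hi ⟨k, h.symm⟩, Function.extend_apply' _ _ _ hi,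
      Function.extend_apply' _ _ _ hi]

section Multilinear

variable {F : Type} [Field F] {A : Type*} [NonUnitalNonAssocRing A] [Module F A]
  [IsScalarTower F A A] [SMulCommClass F A A] {n : ℕ} {f : FreeN F}

lemma lift_eq_lift_of_mem_Pmulti (hf : f ∈ Pmulti F n) {xs ys : ℕ → A}
    (h : ∀ i < n, xs i = ys i) : lift F xs f = lift F ys f := by
  induction hf using Submodule.span_induction with
  | mem _ hg =>
    obtain ⟨t, ht, rfl⟩ := hg
    rw [lift_monoN, lift_monoN]
    exact FreeMagma.lift_congr_of_occ fun i hi => h i (by by_contra hin; simp [ht, hin] at hi)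
  | zero => simp
  | add _ _ _ _ hg hg' => rw [map_add, map_add, hg, hg']
  | smul c _ _ hg => rw [map_smul, map_smul, hg]

lemma isLinearMap_lift_update_of_mem_Pmulti (hf : f ∈ Pmulti F n) (xs : ℕ → A) {k : ℕ}
    (hk : k < n) : IsLinearMap F fun u => lift F (Function.update xs k u) f := by
  induction hf using Submodule.span_induction with
  | mem _ hg =>
    obtain ⟨t, ht, rfl⟩ := hg
    simp only [lift_monoN]
    exact isLinearMap_lift_update_of_occ_eq_one xs (by simp [ht, hk])
  | zero => exact ⟨by simp, by simp⟩
  | add _ _ _ _ hg hg' =>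
    exact ⟨fun u v => by simp only [map_add, hg.map_add, hg'.map_add]; abel,
      fun c u => by simp only [map_add, hg.map_smul, hg'.map_smul, smul_add]⟩
  | smul c _ _ hg =>
    exact ⟨fun u v => by simp only [map_smul, hg.map_add, smul_add],
      fun d u => by simp only [map_smul, hg.map_smul, smul_comm c d]⟩

variable (A) in
def evalMultilinear (hf : f ∈ Pmulti F n) : MultilinearMap F (fun _ : Fin n => A) A where
  toFun xs := lift F (Function.extend Fin.val xs 0) f
  map_update_add' xs k u v := by
    simp only [Fin.extend_val_update]
    exact (isLinearMap_lift_update_of_mem_Pmulti hf _ k.is_lt).map_add u v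
  map_update_smul' xs k c u := by
    simp only [Fin.extend_val_update]
    exact (isLinearMap_lift_update_of_mem_Pmulti hf _ k.is_lt).map_smul c u

lemma lift_mem_of_forall_basis {ι : Type*} [Nonempty ι] (b : Module.Basis ι F A)
    (S : Submodule F A) (hf : f ∈ Pmulti F n)
    (h : ∀ v : ℕ → ι, lift F (fun i => b (v i)) f ∈ S) (xs : ℕ → A) : lift F xs f ∈ S := by
  have hzero : S.mkQ.compMultilinearMap (evalMultilinear A hf) = 0 := by
    refine Module.Basis.ext_multilinear (fun _ => b) fun v => ?_
    rw [zero_apply, LinearMap.compMultilinearMap_apply, Submodule.mkQ_apply,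
      Submodule.Quotient.mk_eq_zero]
    convert h (Function.extend Fin.val v fun _ => Classical.arbitrary ι) using 1
    exact lift_eq_lift_of_mem_Pmulti hf fun i hi => by
      rw [Fin.extend_val_apply _ _ hi, Fin.extend_val_apply _ _ hi]
  have hxs : lift F xs f = evalMultilinear A hf (fun j => xs j) :=
    lift_eq_lift_of_mem_Pmulti hf fun i hi =>
      (Fin.extend_val_apply (fun j : Fin n => xs j) 0 hi).symm
  rw [hxs, ← Submodule.Quotient.mk_eq_zero]
  exact DFunLike.congr_fun hzero _

end Multilinear

section MonomialSubstitution

variable {F : Type} [Field F]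

lemma lift_eq_zero_of_renameVars_swap [CharZero F] {A : Type*}
    [NonUnitalNonAssocRing A] [Module F A] [IsScalarTower F A A] [SMulCommClass F A A]
    {f : FreeN F} {a b : ℕ} (halt : renameVars F (Equiv.swap a b) f = -f) {xs : ℕ → A}
    (hab : xs a = xs b) : lift F xs f = 0 := by
  have hswap : xs ∘ Equiv.swap a b = xs := by simp [Equiv.comp_swap_eq_update, hab]
  have hneg : lift F xs f = -lift F xs f := by
    rw [← map_neg, ← halt, lift_renameVars, hswap]
  have htwo : (2 : F) • lift F xs f = 0 := by
    rw [two_smul]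
    nth_rewrite 2 [hneg]
    exact add_neg_cancel _
  exact (smul_eq_zero.mp htwo).resolve_left two_ne_zero

lemma lift_mono_eq_mono_lift (ms : ℕ → FreeMagma Unit) (t : FreeMagma ℕ) :
    lift F (fun i => mono F (ms i)) (monoN F t) = mono F (FreeMagma.lift ms t) := by
  rw [lift_monoN]
  induction t with
  | ih1 i => rfl
  | ih2 x y hx hy =>
    rw [map_mul, map_mul, hx, hy, mono, mono, mono, MonoidAlgebra.single_mul_single, one_mul]

lemma lift_mono_mem_relI [CharZero F] {n : ℕ} (hn : 4 ≤ n) {f : FreeN F}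
    (hf : f ∈ Pmulti F n)
    (alt01 : renameVars F (Equiv.swap 0 1) f = -f)
    (alt23 : renameVars F (Equiv.swap 2 3) f = -f) (ms : ℕ → FreeMagma Unit) :
    lift F (fun i => mono F (ms i)) f ∈ relI F := by
  by_cases h01 : ms 0 = ms 1
  · rw [lift_eq_zero_of_renameVars_swap alt01 (congrArg (mono F) h01)]
    exact zero_mem _
  by_cases h23 : ms 2 = ms 3
  · rw [lift_eq_zero_of_renameVars_swap alt23 (congrArg (mono F) h23)]
    exact zero_mem _
  suffices Pmulti F n ≤ (relI F).comap (lift F fun i => mono F (ms i) : FreeN F →ₗ[F] FA F) from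
    this hf
  refine Submodule.span_le.mpr ?_
  rintro _ ⟨t, ht, rfl⟩
  show lift F _ (monoN F t) ∈ relI F
  rw [lift_mono_eq_mono_lift]
  refine Submodule.subset_span ⟨_, ?_, rfl⟩
  have hocc (i : ℕ) (hi : i < 4) : occ t i = 1 := by simp [ht, show i < n by omega]
  calc 2 ≤ ∑ i ∈ Finset.range 4, countSq (ms i) := by
        have := one_le_countSq_add_countSq_of_ne h01
        have := one_le_countSq_add_countSq_of_ne h23
        simp only [Finset.sum_range_succ, Finset.sum_range_zero]
        omega
    _ = ∑ i ∈ Finset.range 4, occ t i * countSq (ms i) :=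
        Finset.sum_congr rfl fun i hi => by rw [hocc i (Finset.mem_range.mp hi), one_mul]
    _ ≤ countSq (FreeMagma.lift ms t) := sum_occ_mul_countSq_le _ ms t

end MonomialSubstitution

/-- a multilinear polynomial alternating in the pair `(x₀,x₁)` and in the
disjoint pair `(x₂,x₃)` is an identity of `A`. -/
theorem alternating_two_pairs_is_identity (n : ℕ) (hn : 4 ≤ n)
    (f : FreeN F) (hf : f ∈ Pmulti F n)
    (alt01 : renameVars F (Equiv.swap 0 1) f = -f)
    (alt23 : renameVars F (Equiv.swap 2 3) f = -f) :
    f ∈ IdA F :=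
  Submodule.mem_iInf _ |>.mpr fun xs =>
    lift_mem_of_forall_basis (MonoidAlgebra.basis (FreeMagma Unit) F) (relI F) hf
      (lift_mono_mem_relI hn hf alt01 alt23) xs
end
end

section
/- Let A be the algebra generated by a with every word containing two or more subwords a² equal to zero, and fix an arrangement of parentheses T (realized as a word T₁,…,T_{n−2} of left/right multiplications). The polynomials g₀(x₁,x₂) = (x̄₁x̄₂)T_{1,x₁}⋯T_{n−2,x₁} and g₁(x₁,x₂) = (x̄₁x₁)T̄_{1,x₂}T_{2,x₁}⋯T_{n−2,x₁} are linearly independent modulo the identities of A: if α g₀ + β g₁ vanishes under all evaluations in A, then α = β = 0. -/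
noncomputable section

open Filter Topology

variable (F : Type) [Field F] [CharZero F]

/-- Apply a list of (operator letter, argument) pairs to a magma word, left-to-right:
letter `0` is left multiplication by the argument, letter `1` is right multiplication. -/
def chainArgs : FreeMagma ℕ → List (Fin 2 × FreeMagma ℕ) → FreeMagma ℕ
  | t, [] => t
  | t, (b, x) :: r => chainArgs (if b = 1 then t * x else x * t) r

/-- The monomial `(u·x₀)T₁,x₀ ⋯ T_{i},v ⋯ T_{n-2},x₀` (the `i`-th operator, 0-indexed,
takes the argument `v`, all others take `x₀`). -/
def giMono (T : List (Fin 2)) (i : ℕ) (u v : FreeMagma ℕ) : FreeMagma ℕ :=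
  chainArgs (u * FreeMagma.of 0)
    (T.zip ((List.range T.length).map fun k => if k = i then v else FreeMagma.of 0))

/-- The highest weight vector `g_i(x₀,x₁)`, alternating in the first occurrence of `x₀`
and the occurrence of `x₁` at operator position `i`. -/
def gPoly (T : List (Fin 2)) (i : ℕ) : FreeN F :=
  monoN F (giMono T i (FreeMagma.of 0) (FreeMagma.of 1)) -
    monoN F (giMono T i (FreeMagma.of 1) (FreeMagma.of 0))

/-- The generic multilinear monomial `x₀x₁ T₁,x₂ ⋯ T_{n-2},x_{n-1}` with arrangement `T`. -/
def genericMono (T : List (Fin 2)) : FreeMagma ℕ :=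
  chainArgs (FreeMagma.of 0 * FreeMagma.of 1)
    (T.zip ((List.range T.length).map fun k => FreeMagma.of (k + 2)))

/-- The highest weight vector `g₀(x₀,x₁) = (x̄₀x̄₁)T₁,x₀ ⋯ T_{n-2},x₀`. -/
def g0Poly (T : List (Fin 2)) : FreeN F :=
  monoN F (chainArgs (FreeMagma.of 0 * FreeMagma.of 1)
      (T.zip ((List.range T.length).map fun _ => FreeMagma.of 0))) -
    monoN F (chainArgs (FreeMagma.of 1 * FreeMagma.of 0)
      (T.zip ((List.range T.length).map fun _ => FreeMagma.of 0)))

/-!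
Substitute `x₀ ↦ a` and `x₁ ↦ a²`. Both monomials of `g₀` become words `(a·a²)T` and `(a²·a)T`
with a single subword `a²`, so they are nonzero and distinct in `A`. The second monomial of `g₁`
becomes `(a²·a)T` as well, while its first one, `(a·a)T̄_{1,a²}⋯`, has the same operator letters
but a different innermost product, hence is a third word. The coefficients of `(a·a²)T` and
`(a²·a)T` in the evaluation are `α` and `-(α + β)`, and both must vanish.
-/

open FreeNonUnitalNonAssocAlgebra (lift)

def opChain {M : Type*} [Mul M] : M → List (Fin 2 × M) → M
  | t, [] => t
  | t, (b, x) :: r => opChain (if b = 1 then t * x else x * t) r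

theorem chainArgs_eq_opChain (t : FreeMagma ℕ) (L : List (Fin 2 × FreeMagma ℕ)) :
    chainArgs t L = opChain t L := by
  induction L generalizing t with
  | nil => rfl
  | cons p r ih => exact ih _

theorem map_opChain {M N : Type*} [Mul M] [Mul N] (f : M →ₙ* N) (t : M)
    (L : List (Fin 2 × M)) : f (opChain t L) = opChain (f t) (L.map (Prod.map id f)) := by
  induction L generalizing t with
  | nil => rfl
  | cons p r ih =>
    obtain ⟨b, x⟩ := p
    simp only [opChain, ih, List.map_cons, Prod.map, id]
    split_ifs <;> simp

theorem FreeMagma.eq_of_opChain_eq {α : Type*} {t t' : FreeMagma α}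
    {L L' : List (Fin 2 × FreeMagma α)} (hL : L.map Prod.fst = L'.map Prod.fst)
    (h : opChain t L = opChain t' L') : t = t' := by
  induction L generalizing t t' L' with
  | nil =>
    obtain rfl : L' = [] := List.map_eq_nil_iff.mp hL.symm
    exact h
  | cons p r ih =>
    obtain ⟨b, x⟩ := p
    obtain _ | ⟨⟨b', x'⟩, r'⟩ := L'
    · simp at hL
    simp only [List.map_cons, List.cons.injEq] at hL
    obtain ⟨rfl, hr⟩ := hL
    have hstep := ih hr h
    split_ifs at hstep <;> injection hstep

theorem countSq_opChain {t : FreeMagma Unit} (ht : t.isLeaf = false)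
    (L : List (Fin 2 × FreeMagma Unit)) :
    countSq (opChain t L) = countSq t + (L.map fun p => countSq p.2).sum := by
  induction L generalizing t with
  | nil => simp [opChain]
  | cons p r ih =>
    obtain ⟨b, x⟩ := p
    simp only [opChain, List.map_cons, List.sum_cons]
    split_ifs <;> rw [ih rfl, ← FreeMagma.mul_eq, countSq] <;>
      simp only [ht, Bool.false_and, Bool.and_false, Bool.false_eq_true, ↓reduceIte] <;> omega

local notation "𝔞" => (FreeMagma.of () : FreeMagma Unit)

theorem countSq_opChain_map_leaf {t : FreeMagma Unit} (ht : t.isLeaf = false)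
    (T : List (Fin 2)) : countSq (opChain t (T.map fun b => (b, 𝔞))) = countSq t := by
  simp [countSq_opChain ht, Function.comp_def, countSq]

theorem List.zip_replicate_length {α β : Type*} (l : List α) (b : β) :
    l.zip (List.replicate l.length b) = l.map fun a => (a, b) := by
  induction l <;> simp_all [List.replicate_succ]

def sqSubst (i : ℕ) : FreeMagma Unit := if i = 1 then 𝔞 * 𝔞 else 𝔞

section Evaluation

variable (K : Type) [Field K]

theorem lift_monoN_s15 {A : Type*} [NonUnitalNonAssocSemiring A] [Module K A]
    [IsScalarTower K A A] [SMulCommClass K A A] (f : ℕ → A) (t : FreeMagma ℕ) :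
    lift K f (monoN K t) = FreeMagma.lift f t :=
  DFunLike.congr_fun ((MonoidAlgebra.liftMagma K).symm_apply_apply (FreeMagma.lift f)) t

theorem lift_comp_mono_monoN (φ : ℕ → FreeMagma Unit) (t : FreeMagma ℕ) :
    lift K (mono K ∘ φ) (monoN K t) = mono K (FreeMagma.lift φ t) := by
  rw [lift_monoN_s15]
  exact DFunLike.congr_fun
    (FreeMagma.lift_comp_of' ((MonoidAlgebra.ofMagma K _).comp (FreeMagma.lift φ))) t

theorem lift_sqSubst_g0Poly (T : List (Fin 2)) :
    lift K (mono K ∘ sqSubst) (g0Poly K T) =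
      mono K (opChain (𝔞 * (𝔞 * 𝔞)) (T.map fun b => (b, 𝔞))) -
        mono K (opChain (𝔞 * 𝔞 * 𝔞) (T.map fun b => (b, 𝔞))) := by
  simp only [g0Poly, map_sub, lift_comp_mono_monoN, chainArgs_eq_opChain, map_opChain,
    List.map_const', List.length_range, List.zip_replicate_length, List.map_map]
  rfl

theorem lift_sqSubst_gPoly_zero (T : List (Fin 2)) :
    lift K (mono K ∘ sqSubst) (gPoly K T 0) =
      mono K (opChain (𝔞 * 𝔞)
          (T.zip ((List.range T.length).map fun k => if k = 0 then 𝔞 * 𝔞 else 𝔞))) -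
        mono K (opChain (𝔞 * 𝔞 * 𝔞) (T.map fun b => (b, 𝔞))) := by
  simp only [gPoly, giMono, map_sub, lift_comp_mono_monoN, chainArgs_eq_opChain, map_opChain,
    ite_self, ← List.zip_map_right, List.map_map, List.map_const', List.length_range,
    List.zip_replicate_length]
  congr with k
  by_cases hk : k = 0 <;> simp [hk, sqSubst]

theorem relI_eq_supported : relI K = MonoidAlgebra.supported K K {m | 2 ≤ countSq m} := by
  rw [MonoidAlgebra.supported_eq_span_single, relI]
  congr 1
  ext x
  simp [mono, eq_comm]

theorem eq_zero_of_smul_sub_add_smul_sub_mem_relI {m₁ m₂ m₃ : FreeMagma Unit}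
    (h₁ : countSq m₁ < 2) (h₂ : countSq m₂ < 2) (h₁₂ : m₁ ≠ m₂) (h₃₁ : m₃ ≠ m₁)
    (h₃₂ : m₃ ≠ m₂) {α β : K}
    (h : α • (mono K m₁ - mono K m₂) + β • (mono K m₃ - mono K m₂) ∈ relI K) :
    α = 0 ∧ β = 0 := by
  rw [relI_eq_supported, MonoidAlgebra.mem_supported'] at h
  have hα : α = 0 := by simpa [mono, h₁₂, h₃₁] using h m₁ (by simpa using h₁)
  refine ⟨hα, ?_⟩
  simpa [mono, hα, h₁₂.symm, h₃₂] using h m₂ (by simpa using h₂)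

end Evaluation

theorem g0_g1_independent (T : List (Fin 2))
    (α β : F)
    (h : ∀ xs : ℕ → FA F,
      FreeNonUnitalNonAssocAlgebra.lift F xs (α • g0Poly F T + β • gPoly F T 0) ∈ relI F) :
    α = 0 ∧ β = 0 := by
  have hmem := h (mono F ∘ sqSubst)
  rw [map_add, map_smul, map_smul, lift_sqSubst_g0Poly, lift_sqSubst_gPoly_zero] at hmem
  have hne {u u' : FreeMagma Unit} {L L' : List (Fin 2 × FreeMagma Unit)}
      (hL : L.map Prod.fst = L'.map Prod.fst) (hu : u ≠ u') : opChain u L ≠ opChain u' L' :=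
    fun hEq => hu (FreeMagma.eq_of_opChain_eq hL hEq)
  refine eq_zero_of_smul_sub_add_smul_sub_mem_relI F ?_ ?_ ?_ ?_ ?_ hmem
  · rw [countSq_opChain_map_leaf rfl]; decide
  · rw [countSq_opChain_map_leaf rfl]; decide
  all_goals exact hne (by simp [Function.comp_def, List.map_fst_zip]) (by decide)
end
end
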